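/- The cyclic code C = ⟨(z+1)² + v²⟩ of length 4 over R = Z₂[v]/(v³) is not a (1,1)-reversible complement code. -/

import Mathlib

open Polynomial

noncomputable section

/-- The finite chain ring `R = Z₂[v]/(v³) = Z₂ + vZ₂ + v²Z₂`, `v³ = 0`. -/
abbrev Rv : Type := Polynomial (ZMod 2) ⧸ Ideal.span {(X : Polynomial (ZMod 2)) ^ 3}

/-- The element `v` of `Rv`. -/
def vv : Rv := Ideal.Quotient.mk _ X

instance : (Ideal.span {(X : Polynomial Rv) ^ 4 - 1}).IsTwoSided :=
  @Ideal.instIsTwoSided_1 (Polynomial Rv) _ (Ideal.span {(X : Polynomial Rv) ^ 4 - 1})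

/-- The ambient ring `R[z]/(z⁴ − 1)` of cyclic codes of length 4 over `Rv`. -/
abbrev Q4 : Type := Polynomial Rv ⧸ Ideal.span {(X : Polynomial Rv) ^ 4 - 1}

/-- The element `z` of `Q4`. -/
def zz : Q4 := Ideal.Quotient.mk _ X

/-- The constant `r` viewed in `Q4`. -/
def cst (r : Rv) : Q4 := Ideal.Quotient.mk _ (C r)

/-- The element of `Q4` corresponding to the length-4 codeword `a`. -/
def word4 (a : Fin 4 → Rv) : Q4 := Ideal.Quotient.mk _ (∑ i : Fin 4, C (a i) * X ^ (i : ℕ))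

/-- `I` is a `(1,1)`-reversible complement cyclic code: it contains the
`(1,1)`-reverse complement `∑ᵢ (1 + a_{3−i}) zⁱ` of each codeword `∑ᵢ aᵢ zⁱ`. -/
def IsRC11 (I : Ideal Q4) : Prop :=
  ∀ a : Fin 4 → Rv, word4 a ∈ I → word4 (fun i => 1 + a (Fin.rev i)) ∈ I


/-!
The zero word lies in every code, so a `(1,1)`-reversible complement code contains the
all-ones word `1 + z + z² + z³`, which in characteristic 2 equals `(z + 1)³`. To see that
`(z + 1)³ ∉ ⟨(z + 1)² + v²⟩`, send `z + 1` to `v + ε` in the dual numbers `R[ε]`: this is a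
ring map on `R[z]/(z⁴ − 1)` because `(v + ε)⁴ = 0`, it kills the generator because
`(v + ε)² = v²`, and yet `(v + ε)³ = v²ε ≠ 0`.
-/

open TrivSqZeroExt DualNumber

lemma two_eq_zero_of_zmod_two_algebra (A : Type*) [Semiring A] [Algebra (ZMod 2) A] :
    (2 : A) = 0 := by
  rw [← map_ofNat (algebraMap (ZMod 2) A) 2]
  exact map_zero _

section DualNumber

variable {R : Type*} [CommRing R] {a : R}

lemma inl_mul_eps_ne_zero (ha : a ≠ 0) : (inl a * ε : R[ε]) ≠ 0 := by
  rw [inl_mul_eq_smul, ← inr_eq_smul_eps, Ne, ← inr_zero]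
  exact inr_injective.ne ha

variable [Algebra (ZMod 2) R]

lemma inl_add_eps_sq (a : R) : (inl a + ε : R[ε]) ^ 2 = inl (a ^ 2) := by
  rw [← inl_pow]
  linear_combination (inl a * ε) * two_eq_zero_of_zmod_two_algebra R[ε] +
    (eps_mul_eps : (ε * ε : R[ε]) = 0)

lemma inl_add_eps_pow_four (ha : a ^ 3 = 0) : (inl a + ε : R[ε]) ^ 4 = 0 := by
  rw [show 4 = 2 * 2 from rfl, pow_mul, inl_add_eps_sq, inl_pow, ← pow_mul,
    show a ^ (2 * 2) = a * a ^ 3 by ring, ha, mul_zero, inl_zero]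

lemma inl_add_eps_pow_three (ha : a ^ 3 = 0) : (inl a + ε : R[ε]) ^ 3 = inl (a ^ 2) * ε := by
  rw [pow_succ, inl_add_eps_sq, mul_add, ← inl_mul, ← pow_succ, ha, inl_zero, zero_add]

end DualNumber

lemma vv_pow_three : vv ^ 3 = 0 := by
  rw [vv, ← map_pow, Ideal.Quotient.eq_zero_iff_mem]
  exact Ideal.subset_span rfl

lemma vv_sq_ne_zero : vv ^ 2 ≠ 0 := by
  rw [vv, ← map_pow, Ne, Ideal.Quotient.eq_zero_iff_mem, Ideal.mem_span_singleton]
  intro h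
  have := degree_le_of_dvd h (pow_ne_zero 2 X_ne_zero)
  rw [degree_X_pow, degree_X_pow] at this
  exact absurd this (by decide)

def liftQ4 {B : Type*} [CommRing B] (f : Rv →+* B) (s : B) (hs : s ^ 4 = 1) : Q4 →+* B :=
  Ideal.Quotient.lift _ (eval₂RingHom f s) fun _ hp =>
    (Ideal.span_singleton_le_iff_mem (RingHom.ker _)).2 (by simp [hs]) hp

lemma liftQ4_mk {B : Type*} [CommRing B] (f : Rv →+* B) (s : B) (hs : s ^ 4 = 1) (p : Rv[X]) :
    liftQ4 f s hs (Ideal.Quotient.mk _ p) = p.eval₂ f s :=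
  Ideal.Quotient.lift_mk _ _ _

lemma word4_const_one : word4 (fun _ => 1) = (zz + 1) ^ 3 := by
  rw [word4, zz, ← map_one (Ideal.Quotient.mk (Ideal.span {(X : Rv[X]) ^ 4 - 1})), ← map_add,
    ← map_pow, Fin.sum_univ_four]
  congr 1
  simp only [map_one, one_mul, Fin.coe_ofNat_eq_mod, Nat.reduceMod]
  linear_combination (-(X ^ 2) - X) * two_eq_zero_of_zmod_two_algebra Rv[X]

lemma IsRC11.word4_const_one_mem {I : Ideal Q4} (h : IsRC11 I) : word4 (fun _ => 1) ∈ I := by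
  have h0 : word4 0 ∈ I := by simp [word4]
  simpa using h 0 h0

def toDualNumber : Q4 →+* Rv[ε] :=
  liftQ4 (inlHom Rv Rv) (inl vv + ε + 1) (by
    -- `(t + 1)⁴ = t⁴ + 1` in characteristic 2
    linear_combination inl_add_eps_pow_four vv_pow_three +
      (2 * (inl vv + ε) ^ 3 + 3 * (inl vv + ε) ^ 2 + 2 * (inl vv + ε)) *
        two_eq_zero_of_zmod_two_algebra Rv[ε])

lemma toDualNumber_zz_add_one : toDualNumber (zz + 1) = inl vv + ε := by
  rw [map_add, map_one, toDualNumber, zz, liftQ4_mk, eval₂_X]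
  linear_combination two_eq_zero_of_zmod_two_algebra Rv[ε]

lemma toDualNumber_cst (r : Rv) : toDualNumber (cst r) = inl r := by
  rw [toDualNumber, cst, liftQ4_mk, eval₂_C, inlHom_apply]

/-- The cyclic code `C = ⟨(z+1)² + v²⟩` of length 4 over `Z₂[v]/(v³)` is
not a `(1,1)`-reversible complement code. -/
theorem stmt13 : ¬ IsRC11 (Ideal.span {(zz + 1) ^ 2 + cst (vv ^ 2)}) := by
  intro h
  have hker : (zz + 1) ^ 2 + cst (vv ^ 2) ∈ RingHom.ker toDualNumber := by
    rw [RingHom.mem_ker, map_add, map_pow, toDualNumber_zz_add_one, toDualNumber_cst,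
      inl_add_eps_sq]
    linear_combination inl (vv ^ 2) * two_eq_zero_of_zmod_two_algebra Rv[ε]
  have hones := (Ideal.span_singleton_le_iff_mem _).2 hker h.word4_const_one_mem
  rw [RingHom.mem_ker, word4_const_one, map_pow, toDualNumber_zz_add_one,
    inl_add_eps_pow_three vv_pow_three] at hones
  exact inl_mul_eps_ne_zero vv_sq_ne_zero hones
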